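/- arXiv:2409.11659 — 2 statements merged into one kernel-verified Lean document; each statement's English description precedes it below -/
import Mathlib

section
/- For the weight vector (1,1,1,1,2) (k = 6): I₀(x)·I₁(x)·I₂(x)·I₃(x)·I₄(x) = Y(x) = (1 − 11664x)^{−1} in ℚ[[x]]; moreover ℱ₄(w,x) is independent of w, i.e. ℱ₄(w,x) = I₄(x). -/
/-!
Write `q_d = (w+1)⋯(w+d)`. Then `ℱ = Σ_d x^d P_d(w) / q_d^4` with
`P_d = ∏_{r<d} 9 (6w+6r+1)(6w+6r+2)(6w+6r+4)(6w+6r+5)`, of degree `4d`. Call a sequence of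
polynomials with `P_0 = 1`, `deg P_d ≤ e d` and `P_{j+k}(w) ≡ P_j(w) P_k(w+j) mod (w+j)^e`
a tower of level `e`; the `P_d` above form one of level 4, with equality instead of congruence.

For a tower of level `e+1` with series `F`, the numerators `R_d` of `F / F(0,x)` vanish at
`w = 0, -1, …, -(d-1)`, so `𝐌F = Σ_d x^d P'_d / q_d^e` with `P'_d = (w+d) R_d / (w q_d)`
polynomial, and the `P'_d` form a tower of level `e`. Comparing coefficients of `w^{(e+1)d}` gives
`L_{e+1}(P) = L_e(P') · F(0,x)`, where `L_e(P) = Σ_d x^d [w^{ed}] P_d`. After four steps the level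
is 0: the series no longer depends on `w`, so it equals `I₄`, and `L_0 = I₄`. Multiplying the
four identities, `I₀ I₁ I₂ I₃ I₄ = L_4(P) = Σ_d (9·6⁴)^d x^d = (1 - 11664x)⁻¹`.
-/

open PowerSeries Finset

noncomputable section

/-- The field ℚ(w). -/
abbrev Qw : Type := RatFunc ℚ

/-- The variable w. -/
def wvar : Qw := RatFunc.X

/-- The operator D_w = w + x·d/dx on ℚ(w)[[x]]. -/
def Dw (F : PowerSeries Qw) : PowerSeries Qw :=
  PowerSeries.C wvar * F + PowerSeries.mk fun n => (n : Qw) * PowerSeries.coeff n F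

/-- Evaluation of each coefficient at w = 0, giving F(0,x) ∈ ℚ[[x]]. -/
def evalW0 (F : PowerSeries Qw) : PowerSeries ℚ :=
  PowerSeries.mk fun n => RatFunc.eval (RingHom.id ℚ) 0 (PowerSeries.coeff n F)

/-- The inclusion ℚ[[x]] → ℚ(w)[[x]]. -/
def liftW (f : PowerSeries ℚ) : PowerSeries Qw :=
  PowerSeries.map (algebraMap ℚ Qw) f

/-- The operator 𝐌F(w,x) = w⁻¹·D_w(F(w,x)/F(0,x)). -/
def Mop (F : PowerSeries Qw) : PowerSeries Qw :=
  PowerSeries.C wvar⁻¹ * Dw (F * (liftW (evalW0 F))⁻¹)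

/-- ℱ(w,x) = Σ_{d≥0} x^d (∏_{r=1}^{6d}(6w+r)) / (2^d ∏_{r=1}^{d}((w+r)⁵(2w+2r−1))). -/
def Fcal : PowerSeries Qw :=
  PowerSeries.mk fun d =>
    (∏ r ∈ range (6 * d), (6 * wvar + ((r + 1 : ℕ) : Qw))) /
      ((2 : Qw) ^ d *
        ∏ r ∈ range d, ((wvar + ((r + 1 : ℕ) : Qw)) ^ 5 * (2 * wvar + ((2 * r + 1 : ℕ) : Qw))))

/-- I_p(x) = ℱ_p(0,x) where ℱ_p = 𝐌^p ℱ. -/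
def Ip (p : ℕ) : PowerSeries ℚ := evalW0 (Mop^[p] Fcal)

namespace ZagierZinger

open Polynomial
open scoped Nat

lemma taylor_prod {R ι : Type*} [CommSemiring R] (r : R) (s : Finset ι) (f : ι → R[X]) :
    taylor r (∏ i ∈ s, f i) = ∏ i ∈ s, taylor r (f i) :=
  map_prod (taylorAlgHom r) f s

lemma prod_range_mul_eq_prod_prod {M : Type*} [CommMonoid M] (f : ℕ → M) (k d : ℕ) :
    ∏ r ∈ range (k * d), f r = ∏ r ∈ range d, ∏ i ∈ range k, f (k * r + i) := by
  induction d with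
  | zero => simp
  | succ d ih => rw [Nat.mul_succ, prod_range_add, ih, prod_range_succ]

lemma eval_algebraMap_div_algebraMap {K : Type*} [Field K] {p q : K[X]} {a : K}
    (hq : q.eval a ≠ 0) :
    RatFunc.eval (RingHom.id K) a
      (algebraMap K[X] (RatFunc K) p / algebraMap K[X] (RatFunc K) q) = p.eval a / q.eval a := by
  set x := algebraMap K[X] (RatFunc K) p / algebraMap K[X] (RatFunc K) q
  have hcross : x.num * q = p * x.denom :=
    (RatFunc.num_mul_eq_mul_denom_iff fun h => hq (by simp [h])).2 rfl
  obtain ⟨c, hc⟩ := RatFunc.denom_div_dvd p q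
  have hden : x.denom.eval a ≠ 0 := fun h => hq (by rw [hc, eval_mul, h, zero_mul])
  rw [RatFunc.eval, eval₂_id, eval₂_id, div_eq_div_iff hden hq]
  simpa [mul_comm] using congrArg (eval a) hcross

lemma inv_one_sub_C_mul_X {k : Type*} [Field k] (a : k) :
    (1 - PowerSeries.C a * PowerSeries.X)⁻¹ = PowerSeries.mk (a ^ ·) := by
  rw [PowerSeries.inv_eq_iff_mul_eq_one (by simp)]
  simpa [rescale_mk, rescale_X] using congrArg (rescale a) (mk_one_mul_one_sub_eq_one k)

section RisingProd

variable {K : Type*} [Field K]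

def xAdd (j : ℕ) : K[X] := Polynomial.X + Polynomial.C (j : K)

lemma xAdd_ne_zero (j : ℕ) : (xAdd j : K[X]) ≠ 0 := X_add_C_ne_zero _

lemma monic_xAdd (j : ℕ) : (xAdd j : K[X]).Monic := monic_X_add_C _

lemma natDegree_xAdd (j : ℕ) : (xAdd j : K[X]).natDegree = 1 := natDegree_X_add_C _

lemma eval_xAdd (j : ℕ) (x : K) : (xAdd j).eval x = x + j := by simp [xAdd]

lemma xAdd_zero : (xAdd 0 : K[X]) = Polynomial.X := by simp [xAdd]

lemma xAdd_eq_X_sub_C (j : ℕ) : (xAdd j : K[X]) = Polynomial.X - Polynomial.C (-(j : K)) := by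
  simp [xAdd]

lemma prime_xAdd (j : ℕ) : Prime (xAdd j : K[X]) := by
  rw [xAdd_eq_X_sub_C]
  exact prime_X_sub_C _

lemma xAdd_dvd_iff {j : ℕ} {p : K[X]} : xAdd j ∣ p ↔ p.eval (-(j : K)) = 0 := by
  rw [xAdd_eq_X_sub_C, dvd_iff_isRoot, IsRoot]

lemma taylor_X_eq_xAdd (j : ℕ) : taylor (j : K) Polynomial.X = xAdd j := taylor_X _

lemma taylor_xAdd (j m : ℕ) : taylor (j : K) (xAdd m) = xAdd (j + m) := by
  simp only [xAdd, map_add, taylor_X, taylor_C, Nat.cast_add, map_add]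
  ring

def risingProd (k d : ℕ) : K[X] := ∏ r ∈ Ico k d, xAdd (r + 1)

lemma monic_risingProd (k d : ℕ) : (risingProd k d : K[X]).Monic :=
  monic_prod_of_monic _ _ fun _ _ => monic_xAdd _

lemma risingProd_ne_zero (k d : ℕ) : (risingProd k d : K[X]) ≠ 0 :=
  (monic_risingProd k d).ne_zero

lemma natDegree_risingProd (k d : ℕ) : (risingProd k d : K[X]).natDegree = d - k := by
  simp [risingProd, natDegree_prod_of_monic _ _ fun _ _ => monic_xAdd _, natDegree_xAdd]

@[simp] lemma risingProd_self (k : ℕ) : (risingProd k k : K[X]) = 1 := by simp [risingProd]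

lemma risingProd_mul_risingProd {k m d : ℕ} (hkm : k ≤ m) (hmd : m ≤ d) :
    (risingProd k m * risingProd m d : K[X]) = risingProd k d :=
  prod_Ico_consecutive _ hkm hmd

lemma risingProd_succ {k d : ℕ} (h : k ≤ d) :
    (risingProd k (d + 1) : K[X]) = risingProd k d * xAdd (d + 1) :=
  prod_Ico_succ_top h _

lemma X_mul_risingProd_zero (d : ℕ) :
    Polynomial.X * risingProd 0 d = ∏ r ∈ range (d + 1), (xAdd r : K[X]) := by
  rw [prod_range_succ', risingProd, range_eq_Ico, xAdd_zero, mul_comm]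

lemma eval_zero_risingProd_zero (d : ℕ) : (risingProd 0 d : K[X]).eval 0 = d ! := by
  simp [risingProd, eval_prod, eval_xAdd, ← prod_range_add_one_eq_factorial]

lemma taylor_risingProd (j k d : ℕ) :
    taylor (j : K) (risingProd k d) = risingProd (j + k) (j + d) := by
  simp only [risingProd, taylor_prod, taylor_xAdd, add_comm j, ← prod_Ico_add', add_right_comm]

lemma xAdd_dvd_risingProd {j k d : ℕ} (hkj : k < j) (hjd : j ≤ d) :
    (xAdd j : K[X]) ∣ risingProd k d := by
  obtain ⟨i, rfl⟩ : ∃ i, j = i + 1 := ⟨j - 1, by omega⟩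
  exact dvd_prod_of_mem _ (mem_Ico.2 ⟨by omega, by omega⟩)

lemma eval_risingProd_ne_zero [CharZero K] {j k d : ℕ} (h : j ≤ k ∨ d < j) :
    (risingProd k d : K[X]).eval (-(j : K)) ≠ 0 := by
  rw [risingProd, eval_prod, prod_ne_zero_iff]
  intro r hr
  rw [eval_xAdd, neg_add_eq_sub, sub_ne_zero]
  have : r + 1 ≠ j := by rw [mem_Ico] at hr; omega
  exact_mod_cast this

end RisingProd

section Tower

variable {K : Type*} [Field K]

structure IsTower (e : ℕ) (P : ℕ → K[X]) : Prop where
  zero : P 0 = 1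
  natDegree_le (d : ℕ) : (P d).natDegree ≤ e * d
  pow_dvd_sub (j k : ℕ) : 1 ≤ j → xAdd j ^ e ∣ P (j + k) - P j * taylor (j : K) (P k)

def evalZeroSeq (e : ℕ) (P : ℕ → K[X]) (d : ℕ) : K := (P d).eval 0 / (d ! : K) ^ e

def topCoeffSeq (e : ℕ) (P : ℕ → K[X]) (d : ℕ) : K := (P d).coeff (e * d)

/-- Numerators of `F / F(0,x)` for the series `F` of `P`: the recursion is the coefficientwise
form of `F = (F / F(0,x)) · F(0,x)`. -/
def quotNum (e : ℕ) (P : ℕ → K[X]) : ℕ → K[X]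
  | d => P d - ∑ k ∈ (range d).attach,
      Polynomial.C (evalZeroSeq e P (d - k)) * quotNum e P k * risingProd k d ^ e
  termination_by d => d
  decreasing_by exact mem_range.mp k.2

/-- `𝐌` multiplies the coefficient `R_d / ((w+1)⋯(w+d))^(e+1)` of `F / F(0,x)` by `(w+d)/w`.
For a tower the division is exact (`IsTower.X_mul_risingProd_dvd`). -/
def nextNum (e : ℕ) (P : ℕ → K[X]) (d : ℕ) : K[X] :=
  xAdd d * quotNum (e + 1) P d / (Polynomial.X * risingProd 0 d)

variable {e : ℕ} {P : ℕ → K[X]}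

lemma quotNum_eq (d : ℕ) : quotNum e P d = P d - ∑ k ∈ range d,
    Polynomial.C (evalZeroSeq e P (d - k)) * quotNum e P k * risingProd k d ^ e := by
  rw [quotNum, ← sum_attach (range d)]

lemma evalZeroSeq_zero (h0 : P 0 = 1) : evalZeroSeq e P 0 = 1 := by
  simp [evalZeroSeq, h0]

lemma quotNum_zero (h0 : P 0 = 1) : quotNum e P 0 = 1 := by
  rw [quotNum_eq]
  simp [h0]

lemma sum_range_succ_quotNum (h0 : P 0 = 1) (d : ℕ) :
    ∑ k ∈ range (d + 1),
      Polynomial.C (evalZeroSeq e P (d - k)) * quotNum e P k * risingProd k d ^ e = P d := by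
  rw [sum_range_succ, quotNum_eq d, Nat.sub_self, evalZeroSeq_zero h0]
  simp

lemma natDegree_quotNum_le (hdeg : ∀ d, (P d).natDegree ≤ e * d) (d : ℕ) :
    (quotNum e P d).natDegree ≤ e * d := by
  induction d using Nat.strong_induction_on with
  | _ d ih =>
  rw [quotNum_eq]
  refine (natDegree_sub_le _ _).trans (max_le (hdeg d) (natDegree_sum_le_of_forall_le _ _ ?_))
  intro k hk
  have hkd : k < d := mem_range.1 hk
  calc _ ≤ (Polynomial.C (evalZeroSeq e P (d - k)) * quotNum e P k).natDegree
        + (risingProd k d ^ e : K[X]).natDegree := natDegree_mul_le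
    _ ≤ e * k + e * (d - k) := by
        gcongr
        · exact (natDegree_C_mul_le _ _).trans (ih k hkd)
        · rw [(monic_risingProd k d).natDegree_pow, natDegree_risingProd, mul_comm]
    _ = e * d := by rw [← mul_add, Nat.add_sub_cancel' hkd.le]

lemma pow_dvd_sub_quotNum (j : ℕ) : xAdd j ^ e ∣ P j - quotNum e P j := by
  rw [quotNum_eq, sub_sub_cancel]
  exact dvd_sum fun k hk =>
    (pow_dvd_pow_of_dvd (xAdd_dvd_risingProd (mem_range.1 hk) le_rfl) e).mul_left _

lemma IsTower.pow_dvd_quotNum_add_sub_mul (hP : IsTower e P) {j : ℕ} (hj : 1 ≤ j) (k : ℕ) :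
    xAdd j ^ e ∣ quotNum e P (j + k) - P j * taylor (j : K) (quotNum e P k) := by
  induction k using Nat.strong_induction_on with
  | _ k ih =>
  set a := evalZeroSeq e P
  set R := quotNum e P
  have hτR : taylor (j : K) (R k) = taylor (j : K) (P k) - ∑ s ∈ range k,
      Polynomial.C (a (k - s)) * taylor (j : K) (R s) * risingProd (j + s) (j + k) ^ e := by
    simp [R, a, quotNum_eq k, taylor_risingProd]
  have hR : R (j + k) = P (j + k)
      - ∑ m ∈ range j, Polynomial.C (a (j + k - m)) * R m * risingProd m (j + k) ^ e
      - ∑ s ∈ range k,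
          Polynomial.C (a (k - s)) * R (j + s) * risingProd (j + s) (j + k) ^ e := by
    simp [R, a, quotNum_eq (j + k), sum_range_add, sub_sub, Nat.add_sub_add_left]
  have hsplit : R (j + k) - P j * taylor (j : K) (R k) = (P (j + k) - P j * taylor (j : K) (P k))
      - ∑ m ∈ range j, Polynomial.C (a (j + k - m)) * R m * risingProd m (j + k) ^ e
      - ∑ s ∈ range k, Polynomial.C (a (k - s)) * (R (j + s) - P j * taylor (j : K) (R s))
          * risingProd (j + s) (j + k) ^ e := by
    rw [hR, hτR, mul_sub, mul_sum]
    simp only [mul_sub, sub_mul, sum_sub_distrib]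
    ring_nf
  rw [hsplit]
  refine dvd_sub (dvd_sub (hP.pow_dvd_sub j k hj) (dvd_sum fun m hm => ?_)) (dvd_sum fun s hs => ?_)
  · exact (pow_dvd_pow_of_dvd (xAdd_dvd_risingProd (mem_range.1 hm) (by omega)) e).mul_left _
  · exact ((ih s (mem_range.1 hs)).mul_left _).mul_right _

lemma IsTower.pow_dvd_quotNum_add_sub (hP : IsTower e P) {j : ℕ} (hj : 1 ≤ j) (k : ℕ) :
    xAdd j ^ e ∣ quotNum e P (j + k) - quotNum e P j * taylor (j : K) (quotNum e P k) := by
  convert dvd_add (hP.pow_dvd_quotNum_add_sub_mul hj k)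
    ((pow_dvd_sub_quotNum (P := P) j).mul_right (taylor (j : K) (quotNum e P k))) using 1
  ring

lemma topCoeffSeq_eq_sum (h0 : P 0 = 1) (hdeg : ∀ d, (P d).natDegree ≤ e * d) (d : ℕ) :
    topCoeffSeq e P d =
      ∑ k ∈ range (d + 1), (quotNum e P k).coeff (e * k) * evalZeroSeq e P (d - k) := by
  rw [topCoeffSeq, ← sum_range_succ_quotNum (e := e) h0 d, finsetSum_coeff]
  refine sum_congr rfl fun k hk => ?_
  have hkd : k ≤ d := Nat.lt_succ_iff.1 (mem_range.1 hk)
  have hq : (risingProd k d ^ e : K[X]).natDegree = e * (d - k) := by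
    rw [(monic_risingProd k d).natDegree_pow, natDegree_risingProd]
  rw [mul_assoc, Polynomial.coeff_C_mul,
    show e * d = e * k + e * (d - k) by rw [← mul_add, Nat.add_sub_cancel' hkd],
    coeff_mul_add_eq_of_natDegree_le (natDegree_quotNum_le hdeg k) hq.le, ← hq,
    ((monic_risingProd k d).pow e).coeff_natDegree]
  ring

lemma isTower_prod_taylor {g : K[X]} (hg : g.natDegree ≤ e) :
    IsTower e fun d => ∏ r ∈ range d, taylor (r : K) g where
  zero := prod_range_zero _
  natDegree_le d := by
    refine (natDegree_prod_le _ _).trans ?_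
    simpa [natDegree_taylor, mul_comm e] using Nat.mul_le_mul_left d hg
  pow_dvd_sub j k _ := by
    simp [prod_range_add, taylor_prod, taylor_taylor]

lemma topCoeffSeq_prod_taylor {g : K[X]} (hg : g.natDegree = e) (d : ℕ) :
    topCoeffSeq e (fun d => ∏ r ∈ range d, taylor (r : K) g) d = g.leadingCoeff ^ d := by
  subst hg
  have h := coeff_prod_of_natDegree_le (range d) (fun r => taylor (r : K) g) g.natDegree
    fun r _ => (natDegree_taylor g r).le
  rw [card_range] at h
  simp only [topCoeffSeq, mul_comm g.natDegree, h, coeff_taylor_natDegree, prod_const, card_range]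

end Tower

section Step

variable {K : Type*} [Field K] [CharZero K] {e : ℕ} {P : ℕ → K[X]}

lemma eval_quotNum_zero (h0 : P 0 = 1) {d : ℕ} (hd : 1 ≤ d) : (quotNum e P d).eval 0 = 0 := by
  induction d using Nat.strong_induction_on with
  | _ d ih =>
  rw [quotNum_eq, eval_sub, eval_finsetSum, sum_eq_single_of_mem 0 (mem_range.2 hd)]
  · simp [quotNum_zero h0, evalZeroSeq, eval_zero_risingProd_zero, Nat.factorial_ne_zero]
  · intro k hk hk0
    simp [ih k (mem_range.1 hk) (Nat.one_le_iff_ne_zero.2 hk0)]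

namespace IsTower

variable (hP : IsTower (e + 1) P)
include hP

lemma xAdd_dvd_quotNum {j d : ℕ} (hj : 1 ≤ j) (hjd : j < d) :
    xAdd j ∣ quotNum (e + 1) P d := by
  obtain ⟨k, rfl⟩ : ∃ k, d = j + k := ⟨d - j, by omega⟩
  have h1 : xAdd j ∣ quotNum (e + 1) P (j + k) - P j * taylor (j : K) (quotNum (e + 1) P k) :=
    (dvd_pow_self _ e.succ_ne_zero).trans (hP.pow_dvd_quotNum_add_sub_mul hj k)
  have h2 : xAdd j ∣ P j * taylor (j : K) (quotNum (e + 1) P k) := by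
    rw [xAdd_dvd_iff, eval_mul, taylor_eval, neg_add_cancel,
      eval_quotNum_zero hP.zero (by omega), mul_zero]
  simpa using dvd_add h1 h2

/-- `X (X+1) ⋯ (X+d)` has the distinct roots `0, -1, …, -d`: `quotNum` vanishes at the first
`d` of them and the factor `X + d` supplies the last. -/
lemma X_mul_risingProd_dvd (d : ℕ) :
    Polynomial.X * risingProd 0 d ∣ xAdd d * quotNum (e + 1) P d := by
  rcases Nat.eq_zero_or_pos d with rfl | hd
  · simp [quotNum_zero hP.zero, xAdd_zero]
  rw [X_mul_risingProd_zero]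
  have hcop : (range (d + 1) : Set ℕ).Pairwise
      (Function.onFun IsCoprime fun r => (xAdd r : K[X])) := by
    simp only [xAdd_eq_X_sub_C]
    exact (pairwise_coprime_X_sub_C fun a b h => by simpa using h).set_pairwise _
  refine prod_dvd_of_coprime hcop fun r hr => ?_
  obtain rfl | ⟨h1, h2⟩ | rfl : r = 0 ∨ (1 ≤ r ∧ r < d) ∨ r = d := by
    have := mem_range.1 hr
    omega
  · exact (xAdd_dvd_iff.2 (by simpa using eval_quotNum_zero hP.zero hd)).mul_left _
  · exact (hP.xAdd_dvd_quotNum h1 h2).mul_left _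
  · exact dvd_mul_right _ _

lemma X_mul_risingProd_mul_nextNum (d : ℕ) :
    Polynomial.X * risingProd 0 d * nextNum e P d = xAdd d * quotNum (e + 1) P d :=
  EuclideanDomain.mul_div_cancel' (mul_ne_zero X_ne_zero (risingProd_ne_zero 0 d))
    (hP.X_mul_risingProd_dvd d)

lemma nextNum_zero : nextNum e P 0 = 1 := by
  have h := hP.X_mul_risingProd_mul_nextNum 0
  rw [risingProd_self, mul_one, quotNum_zero hP.zero, mul_one, xAdd_zero] at h
  exact mul_left_cancel₀ X_ne_zero (h.trans (mul_one _).symm)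

lemma natDegree_nextNum_le (d : ℕ) : (nextNum e P d).natDegree ≤ e * d := by
  rcases eq_or_ne (nextNum e P d) 0 with h0 | h0
  · simp [h0]
  have h := congrArg natDegree (hP.X_mul_risingProd_mul_nextNum d)
  rw [natDegree_mul (mul_ne_zero X_ne_zero (risingProd_ne_zero 0 d)) h0,
    natDegree_mul X_ne_zero (risingProd_ne_zero 0 d), natDegree_X, natDegree_risingProd] at h
  have := natDegree_mul_le.trans
    (add_le_add (natDegree_xAdd (K := K) d).le (natDegree_quotNum_le hP.natDegree_le d))
  rw [← h, add_mul, one_mul] at this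
  omega

lemma X_mul_risingProd_mul_nextNum_add_sub (j k : ℕ) :
    Polynomial.X * risingProd 0 (j + k) *
        (nextNum e P (j + k) - nextNum e P j * taylor (j : K) (nextNum e P k)) =
      xAdd (j + k) * (quotNum (e + 1) P (j + k) -
        quotNum (e + 1) P j * taylor (j : K) (quotNum (e + 1) P k)) := by
  have h1 := hP.X_mul_risingProd_mul_nextNum (j + k)
  have h2 := hP.X_mul_risingProd_mul_nextNum j
  have h3 := congrArg (taylor (j : K)) (hP.X_mul_risingProd_mul_nextNum k)
  simp only [taylor_mul, taylor_X_eq_xAdd, taylor_risingProd, taylor_xAdd, add_zero] at h3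
  rw [← risingProd_mul_risingProd (Nat.zero_le j) (Nat.le_add_right j k)] at h1 ⊢
  linear_combination h1 - risingProd j (j + k) * taylor (j : K) (nextNum e P k) * h2
    - quotNum (e + 1) P j * h3

lemma pow_dvd_nextNum_sub {j : ℕ} (hj : 1 ≤ j) (k : ℕ) :
    xAdd j ^ e ∣ nextNum e P (j + k) - nextNum e P j * taylor (j : K) (nextNum e P k) := by
  obtain ⟨i, rfl⟩ : ∃ i, j = i + 1 := ⟨j - 1, by omega⟩
  set c : K[X] := Polynomial.X * risingProd 0 i * risingProd (i + 1) (i + 1 + k)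
  have hsplit : Polynomial.X * risingProd 0 (i + 1 + k) = xAdd (i + 1) * c := by
    rw [← risingProd_mul_risingProd (Nat.zero_le (i + 1)) (Nat.le_add_right _ k),
      risingProd_succ (Nat.zero_le i)]
    ring
  have hc : ¬ xAdd (i + 1) ∣ c := by
    rw [xAdd_dvd_iff, eval_mul, eval_mul, eval_X]
    refine mul_ne_zero (mul_ne_zero ?_ (eval_risingProd_ne_zero (Or.inr (by omega))))
      (eval_risingProd_ne_zero (Or.inl le_rfl))
    exact neg_ne_zero.2 (Nat.cast_ne_zero.2 i.succ_ne_zero)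
  have hdvd := (hP.pow_dvd_quotNum_add_sub hj k).mul_left (xAdd (i + 1 + k))
  rw [← hP.X_mul_risingProd_mul_nextNum_add_sub, hsplit, pow_succ', mul_assoc,
    mul_dvd_mul_iff_left (xAdd_ne_zero _), mul_comm] at hdvd
  exact (prime_xAdd _).pow_dvd_of_dvd_mul_right e hc hdvd

lemma next : IsTower e (nextNum e P) :=
  ⟨hP.nextNum_zero, hP.natDegree_nextNum_le, fun _ k hj => hP.pow_dvd_nextNum_sub hj k⟩

lemma topCoeffSeq_nextNum (d : ℕ) :
    topCoeffSeq e (nextNum e P) d = (quotNum (e + 1) P d).coeff ((e + 1) * d) := by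
  have hmonic : (Polynomial.X * risingProd 0 d : K[X]).Monic :=
    monic_X.mul (monic_risingProd 0 d)
  have hdeg : (Polynomial.X * risingProd 0 d : K[X]).natDegree = 1 + d := by
    rw [monic_X.natDegree_mul (monic_risingProd 0 d), natDegree_X, natDegree_risingProd,
      Nat.sub_zero]
  have hlin : (xAdd d : K[X]).coeff 1 = 1 := by
    simpa [natDegree_xAdd] using (monic_xAdd (K := K) d).coeff_natDegree
  calc topCoeffSeq e (nextNum e P) d
      = (Polynomial.X * risingProd 0 d * nextNum e P d).coeff ((1 + d) + e * d) := by
        rw [coeff_mul_add_eq_of_natDegree_le hdeg.le (hP.natDegree_nextNum_le d), ← hdeg,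
          hmonic.coeff_natDegree, one_mul, topCoeffSeq]
    _ = (xAdd d * quotNum (e + 1) P d).coeff (1 + (e + 1) * d) := by
        rw [hP.X_mul_risingProd_mul_nextNum]
        ring_nf
    _ = (quotNum (e + 1) P d).coeff ((e + 1) * d) := by
        rw [coeff_mul_add_eq_of_natDegree_le (natDegree_xAdd d).le
          (natDegree_quotNum_le hP.natDegree_le d), hlin, one_mul]

lemma mk_topCoeffSeq_eq_mul :
    PowerSeries.mk (topCoeffSeq (e + 1) P) =
      PowerSeries.mk (topCoeffSeq e (nextNum e P)) * PowerSeries.mk (evalZeroSeq (e + 1) P) := by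
  ext d
  rw [PowerSeries.coeff_mul, Nat.sum_antidiagonal_eq_sum_range_succ_mk, PowerSeries.coeff_mk,
    topCoeffSeq_eq_sum hP.zero hP.natDegree_le]
  simp [hP.topCoeffSeq_nextNum]

end IsTower

end Step

section Series

variable {e : ℕ} {P : ℕ → ℚ[X]}

def toSeries (e : ℕ) (P : ℕ → ℚ[X]) : PowerSeries Qw :=
  PowerSeries.mk fun d => algebraMap ℚ[X] Qw (P d) / algebraMap ℚ[X] Qw (risingProd 0 d) ^ e

lemma algebraMap_X_eq_wvar : algebraMap ℚ[X] Qw Polynomial.X = wvar := RatFunc.algebraMap_X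

lemma algebraMap_xAdd (j : ℕ) : algebraMap ℚ[X] Qw (xAdd j) = wvar + j := by
  simp [xAdd, wvar]

lemma evalW0_toSeries (e : ℕ) (P : ℕ → ℚ[X]) :
    evalW0 (toSeries e P) = PowerSeries.mk (evalZeroSeq e P) := by
  ext d
  have hq : (risingProd 0 d ^ e : ℚ[X]).eval 0 ≠ 0 := by
    rw [eval_pow, eval_zero_risingProd_zero]
    positivity
  rw [evalW0, toSeries, coeff_mk, coeff_mk, coeff_mk, ← map_pow,
    eval_algebraMap_div_algebraMap hq, eval_pow, eval_zero_risingProd_zero, evalZeroSeq]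

lemma toSeries_eq_mul (h0 : P 0 = 1) :
    toSeries e P = PowerSeries.mk (fun d => algebraMap ℚ[X] Qw (quotNum e P d) /
      algebraMap ℚ[X] Qw (risingProd 0 d) ^ e) * liftW (PowerSeries.mk (evalZeroSeq e P)) := by
  ext d
  rw [PowerSeries.coeff_mul, Nat.sum_antidiagonal_eq_sum_range_succ_mk, toSeries, coeff_mk,
    div_eq_iff (pow_ne_zero _ (RatFunc.algebraMap_ne_zero (risingProd_ne_zero 0 d))), sum_mul,
    ← sum_range_succ_quotNum (e := e) h0 d, map_sum]
  refine sum_congr rfl fun k hk => ?_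
  have hqk := RatFunc.algebraMap_ne_zero (risingProd_ne_zero (K := ℚ) 0 k)
  simp only [coeff_mk, liftW, PowerSeries.coeff_map]
  rw [← risingProd_mul_risingProd (Nat.zero_le k) (Nat.lt_succ_iff.1 (mem_range.1 hk)),
    IsScalarTower.algebraMap_apply ℚ ℚ[X] Qw, Polynomial.algebraMap_eq]
  simp only [map_mul, map_pow]
  field_simp
  ring

lemma IsTower.Mop_toSeries (hP : IsTower (e + 1) P) :
    Mop (toSeries (e + 1) P) = toSeries e (nextNum e P) := by
  have hI : PowerSeries.constantCoeff (liftW (PowerSeries.mk (evalZeroSeq (e + 1) P))) ≠ 0 := by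
    rw [liftW, ← PowerSeries.coeff_zero_eq_constantCoeff_apply, PowerSeries.coeff_map, coeff_mk,
      evalZeroSeq_zero hP.zero, map_one]
    exact one_ne_zero
  rw [Mop, evalW0_toSeries, toSeries_eq_mul hP.zero, mul_assoc, PowerSeries.mul_inv_cancel _ hI,
    mul_one]
  ext d
  have hkey := congrArg (algebraMap ℚ[X] Qw) (hP.X_mul_risingProd_mul_nextNum d)
  simp only [map_mul, algebraMap_X_eq_wvar, algebraMap_xAdd] at hkey
  have hw : wvar ≠ 0 := RatFunc.X_ne_zero
  have hq := RatFunc.algebraMap_ne_zero (risingProd_ne_zero (K := ℚ) 0 d)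
  simp only [Dw, toSeries, PowerSeries.coeff_C_mul, map_add, coeff_mk]
  rw [← add_mul, ← mul_div_assoc, ← hkey, pow_succ]
  field_simp

lemma toSeries_zero_eq_liftW (hdeg : ∀ d, (P d).natDegree = 0) :
    toSeries 0 P = liftW (PowerSeries.mk (evalZeroSeq 0 P)) := by
  ext d
  have hC : P d = Polynomial.C ((P d).eval 0) := by
    conv_lhs => rw [eq_C_of_natDegree_eq_zero (hdeg d)]
    rw [coeff_zero_eq_eval_zero]
  simp only [toSeries, liftW, coeff_mk, PowerSeries.coeff_map, evalZeroSeq, pow_zero, div_one]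
  rw [hC, IsScalarTower.algebraMap_apply ℚ ℚ[X] Qw, Polynomial.algebraMap_eq, eval_C]

theorem IsTower.iterate_Mop_toSeries (hP : IsTower e P) :
    Mop^[e] (toSeries e P) = liftW (evalW0 (Mop^[e] (toSeries e P))) := by
  induction e generalizing P with
  | zero =>
    rw [Function.iterate_zero_apply, evalW0_toSeries]
    exact toSeries_zero_eq_liftW fun d => Nat.le_zero.1 ((hP.natDegree_le d).trans_eq (zero_mul d))
  | succ e ih =>
    rw [Function.iterate_succ_apply, hP.Mop_toSeries]
    exact ih hP.next

theorem IsTower.prod_evalW0_iterate_Mop (hP : IsTower e P) :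
    ∏ p ∈ range (e + 1), evalW0 (Mop^[p] (toSeries e P)) =
      PowerSeries.mk (topCoeffSeq e P) := by
  induction e generalizing P with
  | zero =>
    ext d
    simp [evalW0_toSeries, evalZeroSeq, topCoeffSeq, coeff_zero_eq_eval_zero]
  | succ e ih =>
    simp only [prod_range_succ' _ (e + 1), Function.iterate_succ_apply, hP.Mop_toSeries,
      ih hP.next, Function.iterate_zero_apply, evalW0_toSeries, hP.mk_topCoeffSeq_eq_mul]

end Series

/-- In the `r`-th block `6w+6r+1, …, 6w+6r+6` of the numerator of `ℱ`, the factors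
`6w+6r+3 = 3(2w+2r+1)` and `6w+6r+6 = 6(w+r+1)` cancel against `2 (w+r+1) (2w+2r+1)` in the
denominator; what is left is `taylor r baseFactor / (w+r+1)^4`. -/
def baseFactor : ℚ[X] :=
  Polynomial.C 9 * ((Polynomial.C 6 * Polynomial.X + Polynomial.C 1) *
    (Polynomial.C 6 * Polynomial.X + Polynomial.C 2) *
    (Polynomial.C 6 * Polynomial.X + Polynomial.C 4) *
    (Polynomial.C 6 * Polynomial.X + Polynomial.C 5))

def baseNum (d : ℕ) : ℚ[X] := ∏ r ∈ range d, taylor (r : ℚ) baseFactor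

lemma natDegree_baseFactor : baseFactor.natDegree = 4 := by
  unfold baseFactor
  compute_degree!

lemma leadingCoeff_baseFactor : baseFactor.leadingCoeff = 11664 := by
  simp only [baseFactor, leadingCoeff_mul, leadingCoeff_C,
    leadingCoeff_linear (show (6 : ℚ) ≠ 0 by norm_num)]
  norm_num

lemma algebraMap_taylor_baseFactor (r : ℕ) :
    algebraMap ℚ[X] Qw (taylor (r : ℚ) baseFactor) = 9 * ((6 * (wvar + r) + 1) *
      (6 * (wvar + r) + 2) * (6 * (wvar + r) + 4) * (6 * (wvar + r) + 5)) := by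
  simp [baseFactor, taylor_X, wvar]

lemma wvar_add_ne_zero (c : ℚ) : wvar + (c : Qw) ≠ 0 := by
  simpa [wvar] using RatFunc.algebraMap_ne_zero (X_add_C_ne_zero c)

lemma Fcal_eq_toSeries : Fcal = toSeries 4 baseNum := by
  ext d
  have h2 : (2 : Qw) ^ d = ∏ _r ∈ range d, 2 := by simp
  rw [Fcal, toSeries, coeff_mk, coeff_mk, baseNum, map_prod, risingProd, ← range_eq_Ico, map_prod,
    ← prod_pow, ← prod_div_distrib, prod_range_mul_eq_prod_prod, h2, ← prod_mul_distrib,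
    ← prod_div_distrib]
  refine prod_congr rfl fun r _ => ?_
  simp only [prod_range_succ, prod_range_zero, algebraMap_xAdd, algebraMap_taylor_baseFactor]
  push_cast
  have hr : wvar + ((r : Qw) + 1) ≠ 0 := by
    simpa using wvar_add_ne_zero (r + 1)
  have hr' : 2 * wvar + (2 * (r : Qw) + 1) ≠ 0 := by
    have h := wvar_add_ne_zero (r + 1 / 2)
    contrapose! h
    push_cast
    linear_combination h / 2
  rw [div_eq_div_iff (mul_ne_zero two_ne_zero (mul_ne_zero (pow_ne_zero _ hr) hr'))
    (pow_ne_zero _ hr)]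
  ring

end ZagierZinger

open ZagierZinger in
theorem statement0 :
    Ip 0 * Ip 1 * Ip 2 * Ip 3 * Ip 4 =
      ((1 : PowerSeries ℚ) - 11664 * PowerSeries.X)⁻¹ ∧
    Mop^[4] Fcal = liftW (Ip 4) := by
  have hT : IsTower 4 baseNum := isTower_prod_taylor natDegree_baseFactor.le
  have htop : topCoeffSeq 4 baseNum = (11664 ^ ·) := funext fun d =>
    (topCoeffSeq_prod_taylor natDegree_baseFactor d).trans (by rw [leadingCoeff_baseFactor])
  refine ⟨?_, ?_⟩
  · rw [← map_ofNat PowerSeries.C 11664, inv_one_sub_C_mul_X, ← htop,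
      ← hT.prod_evalW0_iterate_Mop]
    simp [Ip, Fcal_eq_toSeries, prod_range_succ]
  · simpa [Ip, Fcal_eq_toSeries] using hT.iterate_Mop_toSeries

end
end

section
/- For each of the three weight vectors 𝐚, for every g ∈ ℤ, n ∈ ℕ and G ∈ ℚ[[Q]]: P_{g,n+1}(G) = D(P_{g,n}(G)) + ((g−1)(2B+1−Y) − nA)·P_{g,n}(G). -/
/-!
Statement 2: for each of the weight vectors 𝐚 ∈ {(1,1,1,1,2), (1,1,1,1,4), (1,1,1,2,5)},
the ring ℛ = ℚ[A,B,B₂,B₃,Y] contains all A_m, B_m for m ≥ 1 and is closed under D = q·d/dq.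
Here I₀, I₁, I₂, I₃ ∈ ℚ[[q]] are the components of the expansion
I(q,z) = I₀(q)z + I₁(q)H + I₂(q)H²z⁻¹ + I₃(q)H³z⁻² of the I-function
I(q,z) = z·Σ_{d≥0} q^d (∏_{m=1}^{kd}(kH+mz))/(∏_{i=1}^{5}∏_{m=1}^{a_i d}(a_i H+mz))
in the ring of power series in q with coefficients in ℚ[H]/(H⁴) (with z inverted),
I₁₁ = 1 + D(I₁/I₀), A_m = (D^m I₁₁)/I₁₁, B_m = (D^m I₀)/I₀, A = A₁, B = B₁,
Y = (1−rq)⁻¹, r = k^k/(a₁^{a₁}⋯a₅^{a₅}).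
-/

open PowerSeries Finset

noncomputable section

/-- The ring ℚ[H]/(H⁴). -/
abbrev QH4 : Type := Polynomial ℚ ⧸ Ideal.span {(Polynomial.X : Polynomial ℚ) ^ 4}

/-- The class H of X in ℚ[H]/(H⁴). -/
def Hcl : QH4 := Ideal.Quotient.mk _ Polynomial.X

/-- Laurent polynomials in z over ℚ[H]/(H⁴). -/
abbrev LZ : Type := LaurentPolynomial QH4

/-- The variable z. -/
def zv : LZ := LaurentPolynomial.T 1

/-- The element H. -/
def Hz : LZ := LaurentPolynomial.C Hcl

/-- The inclusion ℚ[[q]] → (ℚ[H]/(H⁴))[z,z⁻¹][[q]]. -/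
def emb (f : PowerSeries ℚ) : PowerSeries LZ :=
  PowerSeries.map (algebraMap ℚ LZ) f

/-- The I-function
I(q,z) = z·Σ_{d≥0} q^d (∏_{m=1}^{kd}(kH+mz))/(∏_{i=1}^{5}∏_{m=1}^{a_i d}(a_i H+mz)),
with k = a₁+⋯+a₅; the denominator factors, being units (H is nilpotent), are inverted
via `Ring.inverse`. -/
def Ifun (a : Fin 5 → ℕ) : PowerSeries LZ :=
  PowerSeries.mk fun d =>
    zv * ((∏ m ∈ range ((∑ i, a i) * d),
            (((∑ i, a i : ℕ) : LZ) * Hz + ((m + 1 : ℕ) : LZ) * zv)) *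
      Ring.inverse (∏ i, ∏ m ∈ range (a i * d),
            (((a i : ℕ) : LZ) * Hz + ((m + 1 : ℕ) : LZ) * zv)))

/-- The statement that I(q,z) = I₀(q)z + I₁(q)H + I₂(q)H²z⁻¹ + I₃(q)H³z⁻². -/
def IsExpansion (a : Fin 5 → ℕ) (I0 I1 I2 I3 : PowerSeries ℚ) : Prop :=
  Ifun a =
    PowerSeries.C (R := LZ) zv * emb I0 + PowerSeries.C (R := LZ) Hz * emb I1 +
      PowerSeries.C (R := LZ) (Hz ^ 2 * LaurentPolynomial.T (-1)) * emb I2 +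
      PowerSeries.C (R := LZ) (Hz ^ 3 * LaurentPolynomial.T (-2)) * emb I3

/-- The derivation D = q·d/dq on ℚ[[q]]. -/
def Dq (f : PowerSeries ℚ) : PowerSeries ℚ :=
  PowerSeries.mk fun n => (n : ℚ) * PowerSeries.coeff (R := ℚ) n f

/-- I₁₁ = 1 + D(I₁/I₀). -/
def I11 (I0 I1 : PowerSeries ℚ) : PowerSeries ℚ := 1 + Dq (I1 * I0⁻¹)

/-- A_m = (D^m I₁₁)/I₁₁. -/
def Agen (I0 I1 : PowerSeries ℚ) (m : ℕ) : PowerSeries ℚ :=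
  Dq^[m] (I11 I0 I1) * (I11 I0 I1)⁻¹

/-- B_m = (D^m I₀)/I₀. -/
def Bgen (I0 : PowerSeries ℚ) (m : ℕ) : PowerSeries ℚ := Dq^[m] I0 * I0⁻¹

/-- r = k^k/(a₁^{a₁}⋯a₅^{a₅}). -/
def rconst (a : Fin 5 → ℕ) : ℚ :=
  ((∑ i, a i : ℕ) : ℚ) ^ (∑ i, a i) / ∏ i, ((a i : ℚ) ^ (a i))

/-- Y = (1 − rq)⁻¹. -/
def Yser (a : Fin 5 → ℕ) : PowerSeries ℚ :=
  ((1 : PowerSeries ℚ) - PowerSeries.C (R := ℚ) (rconst a) * PowerSeries.X)⁻¹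


/-- p_k = k/(a₁⋯a₅). -/
def pk (a : Fin 5 → ℕ) : ℚ := ((∑ i, a i : ℕ) : ℚ) / ∏ i, (a i : ℚ)

/-- Integer powers of a formal power series over ℚ (using the formal inverse for
negative exponents). -/
def zpowQ (f : PowerSeries ℚ) : ℤ → PowerSeries ℚ
  | Int.ofNat n => f ^ n
  | Int.negSucc n => f⁻¹ ^ (n + 1)

/-- Formal composition f(g(q)) of power series (the intended use has g with zero
constant term, in which case this is the usual substitution). -/
def compPS (f g : PowerSeries ℚ) : PowerSeries ℚ :=
  PowerSeries.mk fun n => ∑ i ∈ range (n + 1),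
    PowerSeries.coeff (R := ℚ) i f * PowerSeries.coeff (R := ℚ) n (g ^ i)

/-- The formal exponential series Σ qⁿ/n!. -/
def expPS : PowerSeries ℚ := PowerSeries.mk fun n => ((n.factorial : ℚ))⁻¹

/-- The mirror map q·e^{I₁(q)/I₀(q)}. -/
def mirror (I0 I1 : PowerSeries ℚ) : PowerSeries ℚ :=
  PowerSeries.X * compPS expPS (I1 * I0⁻¹)

/-- P_{g,n}(G) = (p_k Y)^{g−1}·I₁₁ⁿ·I₀^{2−2g}·(((Q·d/dQ)ⁿG)|_{Q = q·e^{I₁/I₀}}). -/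
def Pgn (a : Fin 5 → ℕ) (I0 I1 : PowerSeries ℚ) (g : ℤ) (n : ℕ)
    (G : PowerSeries ℚ) : PowerSeries ℚ :=
  zpowQ (PowerSeries.C (R := ℚ) (pk a) * Yser a) (g - 1) * (I11 I0 I1) ^ n *
    zpowQ I0 (2 - 2 * g) * compPS (Dq^[n] G) (mirror I0 I1)


/-! Every factor of `P_{g,n}` has a logarithmic derivative in `ℚ[A, B, Y]`: `DY = rqY² = (Y − 1)Y`,
so `D (p_k Y)^{g−1} = (g − 1)(Y − 1)·(p_k Y)^{g−1}`; `D I₁₁ⁿ = nA·I₁₁ⁿ`;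
`D I₀^{2−2g} = (2 − 2g)B·I₀^{2−2g}`. The mirror map `m = q e^{I₁/I₀}` satisfies `Dm = I₁₁·m`, so
by the chain rule `D (F ∘ m) = I₁₁·((Q d/dQ) F ∘ m)`, which supplies the extra factor `I₁₁` of
`P_{g,n+1}`. The recursion is then the Leibniz rule. -/

lemma Dq_eq_X_mul_derivative (f : ℚ⟦X⟧) : Dq f = X * d⁄dX ℚ f := by
  ext n
  rcases n with _ | n
  · simp [Dq]
  · rw [coeff_succ_X_mul, coeff_derivative, Dq, coeff_mk]
    push_cast
    ring

lemma Dq_mul (f g : ℚ⟦X⟧) : Dq (f * g) = Dq f * g + f * Dq g := by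
  simp only [Dq_eq_X_mul_derivative, Derivation.leibniz, smul_eq_mul]
  ring

lemma Dq_C (c : ℚ) : Dq (C c) = 0 := by
  simp [Dq_eq_X_mul_derivative]

lemma Dq_pow_of_Dq_eq_mul {f u : ℚ⟦X⟧} (h : Dq f = u * f) (n : ℕ) :
    Dq (f ^ n) = C (n : ℚ) * u * f ^ n := by
  induction n with
  | zero => simp [Dq_eq_X_mul_derivative]
  | succ n ih =>
    rw [pow_succ, Dq_mul, ih, h, Nat.cast_succ, map_add, map_one]
    ring

lemma Dq_inv_of_Dq_eq_mul {f u : ℚ⟦X⟧} (h : Dq f = u * f) : Dq f⁻¹ = -u * f⁻¹ := by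
  by_cases hf : constantCoeff f = 0
  · simp [PowerSeries.inv_eq_zero.mpr hf, Dq_eq_X_mul_derivative]
  · have hff : f * f⁻¹ = 1 := PowerSeries.mul_inv_cancel f hf
    have hD : Dq (f * f⁻¹) = 0 := by simp [hff, Dq_eq_X_mul_derivative]
    rw [Dq_mul, h] at hD
    linear_combination f⁻¹ * hD - (Dq f⁻¹ + u * f⁻¹) * hff

lemma Dq_zpowQ_of_Dq_eq_mul {f u : ℚ⟦X⟧} (h : Dq f = u * f) (m : ℤ) :
    Dq (zpowQ f m) = C (m : ℚ) * u * zpowQ f m := by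
  cases m with
  | ofNat n => simpa [zpowQ] using Dq_pow_of_Dq_eq_mul h n
  | negSucc n =>
    rw [zpowQ, Dq_pow_of_Dq_eq_mul (Dq_inv_of_Dq_eq_mul h), Int.cast_negSucc, map_neg]
    ring

lemma Dq_eq_mul_of_constantCoeff_ne_zero {f : ℚ⟦X⟧} (hf : constantCoeff f ≠ 0) :
    Dq f = (Dq f * f⁻¹) * f := by
  rw [mul_assoc, PowerSeries.inv_mul_cancel f hf, mul_one]

lemma Dq_Yser (a : Fin 5 → ℕ) : Dq (Yser a) = (Yser a - 1) * Yser a := by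
  have hs : constantCoeff (1 - C (rconst a) * X : ℚ⟦X⟧) ≠ 0 := by simp
  have hY : Yser a * (1 - C (rconst a) * X) = 1 := PowerSeries.inv_mul_cancel _ hs
  rw [Dq_eq_X_mul_derivative, Yser, derivative_inv']
  simp only [map_sub, derivative_one, Derivation.leibniz, derivative_C, derivative_X, smul_eq_mul]
  rw [Yser] at hY
  linear_combination (-(1 - C (rconst a) * X)⁻¹) * hY

lemma Dq_C_mul_Yser (a : Fin 5 → ℕ) (c : ℚ) :
    Dq (C c * Yser a) = (Yser a - 1) * (C c * Yser a) := by
  rw [Dq_mul, Dq_C, Dq_Yser]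
  ring

lemma compPS_eq_subst {g : ℚ⟦X⟧} (hg : constantCoeff g = 0) (f : ℚ⟦X⟧) :
    compPS f g = f.subst g := by
  ext n
  rw [coeff_subst' (HasSubst.of_constantCoeff_zero' hg), compPS, coeff_mk]
  refine (finsum_eq_sum_of_support_subset _ fun i hi => ?_).symm
  rw [Finset.coe_range, Set.mem_Iio]
  by_contra! hni
  refine hi ?_
  have hlt : (n : ℕ∞) < (g ^ i).order :=
    lt_of_lt_of_le (by exact_mod_cast hni) (le_order_pow_of_constantCoeff_eq_zero i hg)
  simp only [coeff_of_lt_order n hlt, mul_zero]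

lemma Dq_subst {g : ℚ⟦X⟧} (hg : constantCoeff g = 0) (f : ℚ⟦X⟧) :
    Dq (f.subst g) = (d⁄dX ℚ f).subst g * Dq g := by
  rw [Dq_eq_X_mul_derivative, Dq_eq_X_mul_derivative,
    derivative_subst (HasSubst.of_constantCoeff_zero' hg)]
  ring

lemma Dq_subst_of_Dq_eq_mul {g u : ℚ⟦X⟧} (hg : constantCoeff g = 0) (h : Dq g = u * g)
    (f : ℚ⟦X⟧) : Dq (f.subst g) = u * (Dq f).subst g := by
  have hsub := HasSubst.of_constantCoeff_zero' hg
  rw [Dq_subst hg, h, Dq_eq_X_mul_derivative f, subst_mul hsub, subst_X hsub]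
  ring

lemma expPS_eq_exp : expPS = exp ℚ := by
  ext n
  simp [expPS, coeff_exp]

lemma constantCoeff_mirror (I0 I1 : ℚ⟦X⟧) : constantCoeff (mirror I0 I1) = 0 := by
  simp [mirror]

lemma constantCoeff_I11 (I0 I1 : ℚ⟦X⟧) : constantCoeff (I11 I0 I1) = 1 := by
  simp [I11, Dq_eq_X_mul_derivative]

lemma Dq_mirror {I0 I1 : ℚ⟦X⟧} (hI1 : constantCoeff I1 = 0) :
    Dq (mirror I0 I1) = I11 I0 I1 * mirror I0 I1 := by
  have hv : constantCoeff (I1 * I0⁻¹) = 0 := by rw [map_mul, hI1, zero_mul]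
  rw [mirror, compPS_eq_subst hv, Dq_mul, Dq_subst hv, expPS_eq_exp, derivative_exp, I11,
    Dq_eq_X_mul_derivative X, derivative_X]
  ring

lemma Dq_compPS_mirror {I0 I1 : ℚ⟦X⟧} (hI1 : constantCoeff I1 = 0) (F : ℚ⟦X⟧) :
    Dq (compPS F (mirror I0 I1)) = I11 I0 I1 * compPS (Dq F) (mirror I0 I1) := by
  simp only [compPS_eq_subst (constantCoeff_mirror I0 I1)]
  exact Dq_subst_of_Dq_eq_mul (constantCoeff_mirror I0 I1) (Dq_mirror hI1) F

theorem statement8_general (a : Fin 5 → ℕ)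
    (I0 I1 : PowerSeries ℚ)
    (hI0 : PowerSeries.constantCoeff (R := ℚ) I0 = 1)
    (hI1 : PowerSeries.constantCoeff (R := ℚ) I1 = 0)
    (g : ℤ) (n : ℕ) (G : PowerSeries ℚ) :
    Pgn a I0 I1 g (n + 1) G =
      Dq (Pgn a I0 I1 g n G) +
        (PowerSeries.C (R := ℚ) ((g : ℚ) - 1) * (2 * Bgen I0 1 + 1 - Yser a) -
            PowerSeries.C (R := ℚ) (n : ℚ) * Agen I0 I1 1) * Pgn a I0 I1 g n G := by
  have hPY := Dq_zpowQ_of_Dq_eq_mul (Dq_C_mul_Yser a (pk a)) (g - 1)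
  have hI11n := Dq_pow_of_Dq_eq_mul
    (Dq_eq_mul_of_constantCoeff_ne_zero (f := I11 I0 I1) (by simp [constantCoeff_I11])) n
  have hI0pow := Dq_zpowQ_of_Dq_eq_mul
    (Dq_eq_mul_of_constantCoeff_ne_zero (f := I0) (by simp [hI0])) (2 - 2 * g)
  have hG : Dq (compPS (Dq^[n] G) (mirror I0 I1)) =
      I11 I0 I1 * compPS (Dq^[n + 1] G) (mirror I0 I1) := by
    rw [Function.iterate_succ_apply']
    exact Dq_compPS_mirror hI1 _
  simp only [Pgn, Agen, Bgen, Function.iterate_one, Dq_mul, hPY, hI11n, hI0pow, hG]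
  push_cast
  simp only [map_sub, map_mul, map_ofNat, map_one]
  ring

/-- P_{g,n+1}(G) = D(P_{g,n}(G)) + ((g−1)(2B+1−Y) − nA)·P_{g,n}(G). -/
theorem statement8 (a : Fin 5 → ℕ)
    (ha : a = ![1, 1, 1, 1, 2] ∨ a = ![1, 1, 1, 1, 4] ∨ a = ![1, 1, 1, 2, 5])
    (I0 I1 I2 I3 : PowerSeries ℚ)
    (hexp : IsExpansion a I0 I1 I2 I3)
    (hI0 : PowerSeries.constantCoeff (R := ℚ) I0 = 1)
    (hI1 : PowerSeries.constantCoeff (R := ℚ) I1 = 0)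
    (g : ℤ) (n : ℕ) (G : PowerSeries ℚ) :
    Pgn a I0 I1 g (n + 1) G =
      Dq (Pgn a I0 I1 g n G) +
        (PowerSeries.C (R := ℚ) ((g : ℚ) - 1) * (2 * Bgen I0 1 + 1 - Yser a) -
            PowerSeries.C (R := ℚ) (n : ℚ) * Agen I0 I1 1) * Pgn a I0 I1 g n G :=
  statement8_general a I0 I1 hI0 hI1 g n G

end
end
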